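/- arXiv:math/9710218 — 6 statements merged into one kernel-verified Lean document; each statement's English description precedes it below -/
import Mathlib

section
/- The set CUB $= \{\eta \in {}^{\kappa}2 : \exists C \subseteq \kappa$ closed unbounded such that $\eta(i) = 1$ for all $i \in C\}$ is not meager in ${}^{\kappa}2$. -/
open Cardinal Set

noncomputable section

/-- The basic open set `[ν]` determined by a pattern `ν` of length `β`:
all `η` agreeing with `ν` below `β`. -/
def cyl (β : Ordinal.{0}) (ν : Ordinal.{0} → Bool) : Set (Ordinal.{0} → Bool) :=
  {η | ∀ i < β, η i = ν i}

/-- `A` is nowhere dense in `^κ2`: every `ν ∈ ^{<κ}2` has an extension `η`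
whose basic open set avoids `A`. -/
def Nwd (κ : Cardinal.{0}) (A : Set (Ordinal.{0} → Bool)) : Prop :=
  ∀ β < κ.ord, ∀ ν : Ordinal.{0} → Bool,
    ∃ γ, γ < κ.ord ∧ β ≤ γ ∧ ∃ η : Ordinal.{0} → Bool,
      (∀ i < β, η i = ν i) ∧ cyl γ η ∩ A = ∅

/-- `A` is meager in `^κ2`: covered by a union of `κ` many nowhere dense sets. -/
def MeagerB (κ : Cardinal.{0}) (A : Set (Ordinal.{0} → Bool)) : Prop :=
  ∃ R : Ordinal.{0} → Set (Ordinal.{0} → Bool),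
    (∀ ξ < κ.ord, Nwd κ (R ξ)) ∧ A ⊆ ⋃ ξ ∈ Set.Iio κ.ord, R ξ

/-- `A` is open in the bounded topology on `^κ2`. -/
def IsOpenB (κ : Cardinal.{0}) (A : Set (Ordinal.{0} → Bool)) : Prop :=
  ∀ η ∈ A, ∃ i < κ.ord, cyl i η ⊆ A

/-- `C` is a closed unbounded subset of (the ordinals below) `o`. -/
def ClubIn (o : Ordinal.{0}) (C : Set Ordinal.{0}) : Prop :=
  C ⊆ Set.Iio o ∧ (∀ β < o, ∃ γ ∈ C, β ≤ γ) ∧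
    (∀ S : Set Ordinal.{0}, S ⊆ C → S.Nonempty → sSup S < o → sSup S ∈ C)

/-- CUB: the set of `η ∈ ^κ2` taking value 1 on some club of `κ`. -/
def CUB (κ : Cardinal.{0}) : Set (Ordinal.{0} → Bool) :=
  {η | ∃ C : Set Ordinal.{0}, ClubIn κ.ord C ∧ ∀ i ∈ C, η i = true}

/-- `A ⊆ ^κ2` has strong measure zero. -/
def SMZ (κ : Cardinal.{0}) (A : Set (Ordinal.{0} → Bool)) : Prop :=
  ∀ X : Set Ordinal.{0}, X ⊆ Set.Iio κ.ord → #X = Cardinal.lift.{1} κ →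
    ∃ f : Ordinal.{0} → (Ordinal.{0} → Bool), A ⊆ ⋃ ξ ∈ X, cyl ξ (f ξ)

/-- `f <*_κ g` on the index set `X`: `|{i ∈ X : f i ≥ g i}| < κ`. -/
def LtStarOn (κ : Cardinal.{0}) (X : Set Ordinal.{0}) (f g : Ordinal.{0} → Ordinal.{0}) : Prop :=
  #{i : Ordinal | i ∈ X ∧ g i ≤ f i} < Cardinal.lift.{1} κ

/-- `f <*_κ g` on all of `κ`. -/
def LtStar (κ : Cardinal.{0}) (f g : Ordinal.{0} → Ordinal.{0}) : Prop :=
  LtStarOn κ (Set.Iio κ.ord) f g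

/-- `f` maps ordinals below `κ` to ordinals below `κ`, i.e. `f ∈ ^κκ`. -/
def IntoKappa (κ : Cardinal.{0}) (f : Ordinal.{0} → Ordinal.{0}) : Prop :=
  ∀ i < κ.ord, f i < κ.ord

/-- `F ⊆ ^κκ` is `<*`-bounded. -/
def BoundedFam (κ : Cardinal.{0}) (F : Set (Ordinal.{0} → Ordinal.{0})) : Prop :=
  ∃ g, IntoKappa κ g ∧ ∀ f ∈ F, LtStar κ f g

/-- `F ⊆ ^κκ` is dominating. -/
def DominatingFam (κ : Cardinal.{0}) (F : Set (Ordinal.{0} → Ordinal.{0})) : Prop :=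
  ∀ g, IntoKappa κ g → ∃ f ∈ F, LtStar κ g f

/-- A coding family: for each `i < κ`, `F i` is an injection of `^i2` into `κ`
(it depends only on, and is injective on, restrictions to `i`). -/
def CodingOK (κ : Cardinal.{0}) (F : Ordinal.{0} → (Ordinal.{0} → Bool) → Ordinal.{0}) : Prop :=
  (∀ i < κ.ord, ∀ ν : Ordinal.{0} → Bool, F i ν < κ.ord) ∧
  (∀ i : Ordinal.{0}, ∀ ν ν' : Ordinal.{0} → Bool, (∀ j < i, ν j = ν' j) → F i ν = F i ν') ∧
  (∀ i < κ.ord, ∀ ν ν' : Ordinal.{0} → Bool, F i ν = F i ν' → ∀ j < i, ν j = ν' j)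

/-- `g` (restricted to domain `β`) is a strictly increasing continuous sequence
of ordinals below `κ`. -/
def SIC (κ : Cardinal.{0}) (β : Ordinal.{0}) (g : Ordinal.{0} → Ordinal.{0}) : Prop :=
  (∀ i < β, g i < κ.ord) ∧
  (∀ i j, i < j → j < β → g i < g j) ∧
  (∀ δ, δ < β → Order.IsSuccLimit δ → g δ = sSup (g '' Set.Iio δ))

/-- The open sets `A_ν` of the generalized Souslin representation of CUB:
if `ν` (of length `β`) is strictly increasing and continuous then
`A_ν = {η : ∀ i ∈ dom ν, η (ν i) = 1}`, and `A_ν = ∅` otherwise. -/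
def ANu (κ : Cardinal.{0}) (β : Ordinal.{0}) (g : Ordinal.{0} → Ordinal.{0}) : Set (Ordinal.{0} → Bool) :=
  {η | SIC κ β g ∧ ∀ i < β, η (g i) = true}

/-- The property of Baire in `^κ2` with the bounded topology. -/
def BaireProp (κ : Cardinal.{0}) (A : Set (Ordinal.{0} → Bool)) : Prop :=
  ∃ O, IsOpenB κ O ∧ MeagerB κ ((O \ A) ∪ (A \ O))


/-!
Given nowhere dense sets `R ζ` (`ζ < κ`), build by transfinite recursion an increasing chain of
nodes of `2^{<κ}`: at stage `ζ + 1` append a `1` to the current node, then extend it to a node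
whose cone misses `R ζ`; at limit stages take the union, which stays below `κ` by regularity.
The branch reached at stage `κ` misses every `R ζ`, and it takes the value `1` at the lengths of
the nodes, which form a club because the length of the `ξ`-th node is a normal function of `ξ`.
-/

open Order

universe u

theorem sSup_image_Iio_lt_ord {κ : Cardinal.{u}} (hreg : κ.IsRegular) {δ : Ordinal.{u}}
    (hδ : δ < κ.ord) {f : Ordinal.{u} → Ordinal.{u}} (hf : ∀ ρ < δ, f ρ < κ.ord) :
    sSup (f '' Iio δ) < κ.ord := by
  refine Ordinal.sSup_lt_of_lt_cof ?_ (forall_mem_image.2 hf)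
  rw [← Ordinal.lift_cof, hreg.cof_ord]
  calc #(f '' Iio δ) ≤ #(Iio δ) := mk_image_le
    _ = Cardinal.lift δ.card := mk_Iio_ordinal δ
    _ < Cardinal.lift κ := lift_lt.2 (lt_ord.1 hδ)

theorem clubIn_image_Iio {f : Ordinal.{0} → Ordinal.{0}} (hf : IsNormal f) {o : Ordinal.{0}}
    (hfo : ∀ ξ < o, f ξ < o) : ClubIn o (f '' Iio o) := by
  refine ⟨image_subset_iff.2 hfo,
    fun β hβ => ⟨f β, ⟨β, hβ, rfl⟩, hf.strictMono.le_apply⟩, fun S hS hSne hSo => ?_⟩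
  have hIS : f '' (Iio o ∩ f ⁻¹' S) = S := by rw [image_inter_preimage, inter_eq_right.2 hS]
  have hIne : (Iio o ∩ f ⁻¹' S).Nonempty := by rwa [← image_nonempty, hIS]
  have hSbdd : BddAbove S := ⟨o, fun x hx => le_of_lt (image_subset_iff.2 hfo (hS hx))⟩
  have hIle : sSup (Iio o ∩ f ⁻¹' S) ≤ sSup S :=
    csSup_le hIne fun ζ hζ => hf.strictMono.le_apply.trans (le_csSup hSbdd hζ.2)
  refine ⟨_, hIle.trans_lt hSo, ?_⟩
  rw [hf.map_sSup hIne ⟨o, fun _ h => h.1.le⟩, hIS]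

/-- A node of `2^{<κ}`: the restriction of `val` to `len`, ordered below by extension. -/
structure Node where
  len : Ordinal.{0}
  val : Ordinal.{0} → Bool

namespace Node

instance : Preorder Node where
  le p q := p.len ≤ q.len ∧ q.val ∈ cyl p.len p.val
  le_refl _ := ⟨le_rfl, fun _ _ => rfl⟩
  le_trans _ _ _ hpq hqr :=
    ⟨hpq.1.trans hqr.1, fun i hi => (hqr.2 i (hi.trans_le hpq.1)).trans (hpq.2 i hi)⟩

def appendTrue (p : Node) : Node := ⟨p.len + 1, Function.update p.val p.len true⟩

theorem le_appendTrue (p : Node) : p ≤ p.appendTrue :=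
  ⟨le_self_add, fun _ hi => Function.update_of_ne hi.ne _ _⟩

theorem appendTrue_val_len (p : Node) : p.appendTrue.val p.len = true := Function.update_self ..

open scoped Classical in
def sUnion (S : Set Node) : Node :=
  ⟨sSup (len '' S), fun i => decide (∃ p ∈ S, i < p.len ∧ p.val i = true)⟩

theorem le_sUnion {S : Set Node} (hS : IsChain (· ≤ ·) S) (hb : BddAbove (len '' S)) {p : Node}
    (hp : p ∈ S) : p ≤ sUnion S := by
  refine ⟨le_csSup hb (mem_image_of_mem _ hp), fun i hi => ?_⟩
  cases hpi : p.val i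
  · simp only [sUnion, decide_eq_false_iff_not, not_exists, not_and]
    intro q hq hiq hqi
    rcases hS.total hp hq with hpq | hqp
    · rw [hpq.2 i hi, hpi] at hqi
      exact absurd hqi Bool.false_ne_true
    · rw [hqp.2 i hiq, hqi] at hpi
      exact absurd hpi.symm Bool.false_ne_true
  · simpa [sUnion] using ⟨p, hp, hi, hpi⟩

theorem exists_ge_cyl_inter_eq_empty {κ : Cardinal.{0}} {A : Set (Ordinal.{0} → Bool)}
    (hA : Nwd κ A) {p : Node} (hp : p.len < κ.ord) :
    ∃ q : Node, p ≤ q ∧ q.len < κ.ord ∧ cyl q.len q.val ∩ A = ∅ := by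
  obtain ⟨γ, hγ, hle, η, hη, hηA⟩ := hA p.len hp p.val
  exact ⟨⟨γ, η⟩, ⟨hle, hη⟩, hγ, hηA⟩

open scoped Classical in
/-- Junk value `p` when `A` is not nowhere dense or `p` is too long. -/
def avoid (κ : Cardinal.{0}) (A : Set (Ordinal.{0} → Bool)) (p : Node) : Node :=
  if h : Nwd κ A ∧ p.len < κ.ord then (exists_ge_cyl_inter_eq_empty h.1 h.2).choose else p

variable {κ : Cardinal.{0}} {A : Set (Ordinal.{0} → Bool)} {p : Node}

theorem le_avoid : p ≤ p.avoid κ A := by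
  unfold avoid
  split_ifs with h
  · exact (exists_ge_cyl_inter_eq_empty h.1 h.2).choose_spec.1
  · exact le_rfl

theorem avoid_len_lt (hp : p.len < κ.ord) : (p.avoid κ A).len < κ.ord := by
  unfold avoid
  split_ifs with h
  · exact (exists_ge_cyl_inter_eq_empty h.1 h.2).choose_spec.2.1
  · exact hp

theorem cyl_avoid_inter_eq_empty (hA : Nwd κ A) (hp : p.len < κ.ord) :
    cyl (p.avoid κ A).len (p.avoid κ A).val ∩ A = ∅ := by
  rw [avoid, dif_pos ⟨hA, hp⟩]
  exact (exists_ge_cyl_inter_eq_empty hA hp).choose_spec.2.2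

end Node

def nodeSeq (κ : Cardinal.{0}) (R : Ordinal.{0} → Set (Ordinal.{0} → Bool))
    (ξ : Ordinal.{0}) : Node :=
  Ordinal.limitRecOn (motive := fun _ => Node) ξ ⟨0, fun _ => false⟩
    (fun ζ p => p.appendTrue.avoid κ (R ζ))
    (fun δ _ s => Node.sUnion (range fun ρ : Iio δ => s ρ ρ.2))

section nodeSeq

variable {κ : Cardinal.{0}} (R : Ordinal.{0} → Set (Ordinal.{0} → Bool))

theorem nodeSeq_zero : nodeSeq κ R 0 = ⟨0, fun _ => false⟩ :=
  Ordinal.limitRecOn_zero ..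

theorem nodeSeq_add_one (ζ : Ordinal.{0}) :
    nodeSeq κ R (ζ + 1) = (nodeSeq κ R ζ).appendTrue.avoid κ (R ζ) :=
  Ordinal.limitRecOn_add_one ..

theorem nodeSeq_limit {δ : Ordinal.{0}} (hδ : IsSuccLimit δ) :
    nodeSeq κ R δ = Node.sUnion (nodeSeq κ R '' Iio δ) := by
  rw [nodeSeq, Ordinal.limitRecOn_limit _ _ _ _ hδ]
  congr 1
  ext p
  simp [nodeSeq]

theorem appendTrue_le_nodeSeq_add_one (ζ : Ordinal.{0}) :
    (nodeSeq κ R ζ).appendTrue ≤ nodeSeq κ R (ζ + 1) := by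
  rw [nodeSeq_add_one]
  exact Node.le_avoid

theorem monotone_nodeSeq : Monotone (nodeSeq κ R) := by
  intro ζ ξ hζξ
  induction ξ using Ordinal.limitRecOn generalizing ζ with
  | zero => rw [nonpos_iff_eq_zero.1 hζξ]
  | add_one α ih =>
    rcases hζξ.lt_or_eq with h | rfl
    · exact (ih (lt_add_one_iff.1 h)).trans
        ((Node.le_appendTrue _).trans (appendTrue_le_nodeSeq_add_one R α))
    · exact le_rfl
  | limit δ hδ ih =>
    rcases hζξ.lt_or_eq with h | rfl
    · have hchain : IsChain (· ≤ ·) (nodeSeq κ R '' Iio δ) := by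
        rintro _ ⟨ρ, hρ, rfl⟩ _ ⟨ρ', hρ', rfl⟩ -
        rcases le_total ρ ρ' with hle | hle
        · exact Or.inl (ih ρ' hρ' hle)
        · exact Or.inr (ih ρ hρ hle)
      rw [nodeSeq_limit R hδ]
      exact Node.le_sUnion hchain Ordinal.bddAbove_of_small (mem_image_of_mem _ h)
    · exact le_rfl

theorem isNormal_len_nodeSeq : IsNormal fun ξ => (nodeSeq κ R ξ).len := by
  refine IsNormal.of_succ_lt (fun ζ => ?_) fun {δ} hδ => ?_
  · rw [succ_eq_add_one]
    exact (lt_add_one _).trans_le (appendTrue_le_nodeSeq_add_one R ζ).1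
  · rw [nodeSeq_limit R hδ, Node.sUnion, image_image]
    exact isLUB_csSup (image_nonempty.2 ⟨⊥, hδ.bot_lt⟩) Ordinal.bddAbove_of_small

theorem len_nodeSeq_lt (hreg : κ.IsRegular) {ξ : Ordinal.{0}} (hξ : ξ < κ.ord) :
    (nodeSeq κ R ξ).len < κ.ord := by
  induction ξ using Ordinal.limitRecOn with
  | zero => rw [nodeSeq_zero]; exact hreg.ord_pos
  | add_one ζ ih =>
    rw [nodeSeq_add_one]
    exact Node.avoid_len_lt
      ((isSuccLimit_ord hreg.aleph0_le).add_one_lt (ih ((lt_add_one ζ).trans hξ)))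
  | limit δ hδ ih =>
    rw [nodeSeq_limit R hδ, Node.sUnion, image_image]
    exact sSup_image_Iio_lt_ord hreg hξ fun ρ hρ => ih ρ hρ (hρ.trans hξ)

theorem nodeSeq_val_len {ζ ξ : Ordinal.{0}} (h : ζ < ξ) :
    (nodeSeq κ R ξ).val (nodeSeq κ R ζ).len = true := by
  have hle := appendTrue_le_nodeSeq_add_one (κ := κ) R ζ
  rw [(monotone_nodeSeq R (add_one_le_of_lt h)).2 _ (lt_add_one _ |>.trans_le hle.1),
    hle.2 _ (lt_add_one _), Node.appendTrue_val_len]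

theorem nodeSeq_val_notMem (hreg : κ.IsRegular) {ζ ξ : Ordinal.{0}}
    (hA : Nwd κ (R ζ)) (hζ : ζ < κ.ord) (hζξ : ζ < ξ) :
    (nodeSeq κ R ξ).val ∉ R ζ := by
  have hlen : (nodeSeq κ R ζ).appendTrue.len < κ.ord :=
    (isSuccLimit_ord hreg.aleph0_le).add_one_lt (len_nodeSeq_lt R hreg hζ)
  have hempty := Node.cyl_avoid_inter_eq_empty hA hlen
  rw [← nodeSeq_add_one] at hempty
  exact fun hR => (eq_empty_iff_forall_notMem.1 hempty) _
    ⟨(monotone_nodeSeq R (add_one_le_of_lt hζξ)).2, hR⟩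

end nodeSeq

theorem CUB_not_meager_general (κ : Cardinal.{0}) (hreg : κ.IsRegular) :
    ¬ MeagerB κ (CUB κ) := by
  rintro ⟨R, hnwd, hcov⟩
  have hclub : ClubIn κ.ord ((fun ξ => (nodeSeq κ R ξ).len) '' Iio κ.ord) :=
    clubIn_image_Iio (isNormal_len_nodeSeq R) fun _ hξ => len_nodeSeq_lt R hreg hξ
  have hcub : (nodeSeq κ R κ.ord).val ∈ CUB κ :=
    ⟨_, hclub, by rintro _ ⟨ζ, hζ, rfl⟩; exact nodeSeq_val_len R hζ⟩
  obtain ⟨ζ, hζ, hR⟩ := mem_iUnion₂.1 (hcov hcub)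
  exact nodeSeq_val_notMem R hreg (hnwd ζ hζ) hζ hζ hR

/-- the set CUB is not meager in `^κ2`. -/
theorem CUB_not_meager (κ : Cardinal.{0}) (hreg : κ.IsRegular) (hκ : ℵ₀ < κ) :
    ¬ MeagerB κ (CUB κ) :=
  CUB_not_meager_general κ hreg

end
end

section
/- Let $\kappa = \kappa^{<\kappa}$ be uncountable. A set $A \subseteq {}^{\kappa}2$ has strong measure zero if and only if for every strictly increasing continuous sequence $\langle \alpha_i : i < \kappa \rangle$ of ordinals below $\kappa$ there exist sets $Y_i \subseteq {}^{\alpha_{i+1}}2$ with $|Y_i| \leq |\alpha_i|$ such that for every $\eta \in A$ there are $\kappa$ many $i < \kappa$ with $\eta \upharpoonright \alpha_{i+1} \in Y_i$. -/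
open Cardinal Set

noncomputable section

/-!
`κ ^< κ = κ` forces `κ` to be regular, since `κ < κ ^ cf κ`.

(⇒) Given `α`, apply strong measure zero to `X_j = {α (i + 1) : j < i < κ}` for every `j < κ`,
obtaining patterns `F_j`, and let `Y_i = {F_j (α (i + 1)) : j < i}`, of size at most
`|i| ≤ |α i|`. Each `η ∈ A` lies in `[F_j (α (i + 1))]` for some `i > j`; this happens for
unboundedly many, hence `κ` many, `i`.

(⇐) Given `X` of size `κ`, build a normal sequence `α` such that each gap `(α i, α (i + 1))`
contains at least `|α i|` points of `X`, and inject `Y i` into that gap. The gaps are disjoint,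
so one `f` can send every point chosen for `y ∈ Y i` back to `y`; then `η ↾ α (i + 1) = y`
puts `η` in `[f ξ ↾ ξ]` for the point `ξ < α (i + 1)` chosen for `y`.
-/

universe u

open Order

namespace Cardinal

variable {κ : Cardinal.{u}}

theorem isRegular_of_powerlt_self_eq (hκ : ℵ₀ ≤ κ) (h : κ ^< κ = κ) : κ.IsRegular :=
  ⟨hκ, le_of_not_gt fun hcof => (lt_power_cof_ord hκ).not_ge ((le_powerlt κ hcof).trans_eq h)⟩

theorem mk_Iio_ord : #(Iio κ.ord) = lift.{u + 1} κ := by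
  rw [mk_Iio_ordinal, card_ord]

theorem sSup_lt_ord_of_mk_lt (hκ : κ.IsRegular) {S : Set Ordinal.{u}} (hS : S ⊆ Iio κ.ord)
    (h : #S < lift.{u + 1} κ) : sSup S < κ.ord :=
  Ordinal.sSup_lt_of_lt_cof (by rwa [← Ordinal.lift_cof, hκ.cof_ord]) hS

theorem mk_eq_of_forall_exists_le (hκ : κ.IsRegular) {S : Set Ordinal.{u}}
    (hS : S ⊆ Iio κ.ord) (hub : ∀ b < κ.ord, ∃ i ∈ S, b ≤ i) : #S = lift.{u + 1} κ := by
  refine (mk_le_mk_of_subset hS).trans_eq mk_Iio_ord |>.antisymm ?_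
  by_contra! h
  have hsup := sSup_lt_ord_of_mk_lt hκ hS h
  obtain ⟨i, hi, hle⟩ := hub _ ((isSuccLimit_ord hκ.aleph0_le).succ_lt hsup)
  exact (lt_succ_iff.2 (le_csSup (bddAbove_Iio.mono hS) hi)).not_ge hle

theorem mk_inter_Ioi_eq (hκ : ℵ₀ ≤ κ) {X : Set Ordinal.{u}} (hX : #X = lift.{u + 1} κ)
    {β : Ordinal.{u}} (hβ : β < κ.ord) : #(X ∩ Ioi β : Set Ordinal) = lift.{u + 1} κ := by
  refine (mk_le_mk_of_subset inter_subset_left).trans_eq hX |>.antisymm ?_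
  by_contra! h
  have hIic : #(Iic β) < lift.{u + 1} κ := by
    rw [← Iio_succ, mk_Iio_ordinal, lift_lt, ← lt_ord]
    exact (isSuccLimit_ord hκ).succ_lt hβ
  have hcover : X ⊆ (X ∩ Ioi β) ∪ Iic β := fun x hx => (le_or_gt x β).elim Or.inr (Or.inl ⟨hx, ·⟩)
  refine (hX ▸ mk_le_mk_of_subset hcover).not_gt ?_
  exact (mk_union_le _ _).trans_lt (add_lt_of_lt (aleph0_le_lift.2 hκ) h hIic)

theorem exists_lt_ord_lift_card_le_mk_inter_Ioo (hκ : κ.IsRegular)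
    {X : Set Ordinal.{u}} (hXκ : X ⊆ Iio κ.ord) (hX : #X = lift.{u + 1} κ) {β : Ordinal.{u}}
    (hβ : β < κ.ord) :
    ∃ γ < κ.ord, β < γ ∧ lift.{u + 1} β.card ≤ #(X ∩ Ioo β γ : Set Ordinal) := by
  obtain ⟨S, hSX, hS⟩ := le_mk_iff_exists_subset.1 <|
    (lift_le.2 (lt_ord.1 hβ).le).trans_eq (mk_inter_Ioi_eq hκ.aleph0_le hX hβ).symm
  have hSκ : S ⊆ Iio κ.ord := fun x hx => hXκ (hSX hx).1
  have hsup := sSup_lt_ord_of_mk_lt hκ hSκ (hS ▸ lift_lt.2 (lt_ord.1 hβ))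
  refine ⟨succ (max β (sSup S)), (isSuccLimit_ord hκ.aleph0_le).succ_lt (max_lt hβ hsup),
    lt_succ_of_le (le_max_left _ _), hS ▸ mk_le_mk_of_subset fun x hx => ?_⟩
  exact ⟨(hSX hx).1, (hSX hx).2,
    lt_succ_of_le ((le_csSup (bddAbove_Iio.mono hSκ) hx).trans (le_max_right _ _))⟩

end Cardinal

theorem Set.PairwiseDisjoint.exists_subset_image {ι : Type*} {α β : Type u} [Nonempty β]
    {s : Set ι} {T : ι → Set α} {Y : ι → Set β} (hT : s.PairwiseDisjoint T)
    (hY : ∀ i ∈ s, #(Y i) ≤ #(T i)) : ∃ f : α → β, ∀ i ∈ s, Y i ⊆ f '' T i := by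
  let e : ∀ i : s, Y i ↪ T i := fun i => Classical.choice ((Cardinal.le_def _ _).1 (hY i i.2))
  let φ : (Σ i : s, Y i) → α := fun p => e p.1 p.2
  have hφ : φ.Injective := by
    rintro ⟨i, y⟩ ⟨j, y'⟩ h
    obtain rfl : i = j := Subtype.ext <| hT.elim i.2 j.2 <|
      Set.not_disjoint_iff.2 ⟨φ ⟨i, y⟩, (e i y).2, h.symm ▸ (e j y').2⟩
    exact congrArg _ ((e i).injective (Subtype.ext h))
  refine ⟨Function.extend φ (fun p => p.2) fun _ => Classical.arbitrary β, fun i hi y hy => ?_⟩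
  exact ⟨φ ⟨⟨i, hi⟩, y, hy⟩, (e ⟨i, hi⟩ ⟨y, hy⟩).2, hφ.extend_apply _ _ _⟩

namespace Ordinal

def transfiniteIterate (next : Ordinal.{u} → Ordinal.{u}) (i : Ordinal.{u}) : Ordinal.{u} :=
  limitRecOn i 0 (fun _ a => next a) fun o _ f => ⨆ j : Iio o, f j j.2

variable {next : Ordinal.{u} → Ordinal.{u}}

@[simp]
theorem transfiniteIterate_zero : transfiniteIterate next 0 = 0 :=
  limitRecOn_zero ..

@[simp]
theorem transfiniteIterate_add_one (i : Ordinal.{u}) :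
    transfiniteIterate next (i + 1) = next (transfiniteIterate next i) :=
  limitRecOn_add_one ..

theorem transfiniteIterate_of_isSuccLimit {o : Ordinal.{u}} (ho : IsSuccLimit o) :
    transfiniteIterate next o = ⨆ j : Iio o, transfiniteIterate next j :=
  limitRecOn_limit _ _ _ _ ho

theorem isNormal_transfiniteIterate (hnext : ∀ β, β < next β) :
    IsNormal (transfiniteIterate next) := by
  refine IsNormal.of_succ_lt (fun i => ?_) fun {o} ho => ?_
  · rw [succ_eq_add_one, transfiniteIterate_add_one]
    exact hnext _
  · rw [transfiniteIterate_of_isSuccLimit ho, image_eq_range]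
    have : Nonempty (Iio o) := ⟨⟨⊥, ho.bot_lt⟩⟩
    exact isLUB_ciSup bddAbove_of_small

theorem transfiniteIterate_lt_ord {κ : Cardinal.{u}} (hκ : κ.IsRegular)
    (hnext : ∀ β < κ.ord, next β < κ.ord) {i : Ordinal.{u}} (hi : i < κ.ord) :
    transfiniteIterate next i < κ.ord := by
  induction i using limitRecOn with
  | zero =>
    rw [transfiniteIterate_zero]
    exact Cardinal.ord_pos.2 hκ.pos
  | add_one i ih =>
    rw [transfiniteIterate_add_one]
    exact hnext _ (ih ((lt_add_one i).trans hi))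
  | limit o ho ih =>
    rw [transfiniteIterate_of_isSuccLimit ho]
    refine lift_iSup_lt_of_lt_cof ?_ fun j => ih j j.2 (j.2.trans hi)
    rwa [← lift_cof, hκ.cof_ord, Cardinal.mk_Iio_ordinal, Cardinal.lift_lift, Cardinal.lift_lt,
      ← Cardinal.lt_ord]

end Ordinal

theorem StrictMonoOn.le_apply_of_lt {β : Type*} [LinearOrder β] [WellFoundedLT β] {f : β → β}
    {c : β} (hf : StrictMonoOn f (Iio c)) {x : β} (hx : x < c) : x ≤ f x := by
  induction x using WellFoundedLT.induction with
  | _ x ih =>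
    by_contra! hfx
    exact (ih _ hfx (hfx.trans hx)).not_gt (hf (hfx.trans hx) hx hfx)

theorem SIC.strictMonoOn {κ : Cardinal.{0}} {β : Ordinal.{0}} {g : Ordinal.{0} → Ordinal.{0}}
    (h : SIC κ β g) : StrictMonoOn g (Iio β) :=
  fun i _ j hj hij => h.2.1 i j hij hj

theorem Order.IsNormal.sic {κ : Cardinal.{0}} {β : Ordinal.{0}} {g : Ordinal.{0} → Ordinal.{0}}
    (hg : IsNormal g) (hlt : ∀ i < β, g i < κ.ord) : SIC κ β g :=
  ⟨hlt, fun _ _ hij _ => hg.strictMono hij, fun _ _ hδ =>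
    ((hg.isLUB_image_Iio_of_isSuccLimit hδ).csSup_eq ⟨g ⊥, ⊥, hδ.bot_lt, rfl⟩).symm⟩

def IsSmallIntervalCover (κ : Cardinal.{0}) (α : Ordinal.{0} → Ordinal.{0})
    (A : Set (Ordinal.{0} → Bool)) (Y : Ordinal.{0} → Set (Ordinal.{0} → Bool)) : Prop :=
  (∀ i < κ.ord, #(Y i) ≤ Cardinal.lift.{1} (α i).card) ∧
    ∀ η ∈ A, #{i : Ordinal.{0} | i < κ.ord ∧ ∃ y ∈ Y i, ∀ j < α (i + 1), η j = y j}
      = Cardinal.lift.{1} κ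

theorem SMZ.exists_isSmallIntervalCover {κ : Cardinal.{0}} (hκ : κ.IsRegular)
    {A : Set (Ordinal.{0} → Bool)} (hA : SMZ κ A) {α : Ordinal.{0} → Ordinal.{0}}
    (hα : SIC κ κ.ord α) : ∃ Y, IsSmallIntervalCover κ α A Y := by
  have hlim := isSuccLimit_ord hκ.aleph0_le
  have hmono : StrictMonoOn (fun i => α (i + 1)) (Iio κ.ord) := fun i hi j hj hij =>
    hα.strictMonoOn (hlim.add_one_lt hi) (hlim.add_one_lt hj) (by simpa using hij)
  let X : Ordinal → Set Ordinal := fun j => (fun i => α (i + 1)) '' Ioo j κ.ord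
  have hX : ∀ j < κ.ord, X j ⊆ Iio κ.ord ∧ #(X j) = lift κ := fun j hj =>
    ⟨image_subset_iff.2 fun i hi => hα.1 _ (hlim.add_one_lt hi.2), by
      rw [mk_image_eq_of_injOn _ _ (hmono.injOn.mono Ioo_subset_Iio_self), ← Iio_inter_Ioi,
        mk_inter_Ioi_eq hκ.aleph0_le mk_Iio_ord hj]⟩
  choose! F hF using fun j hj => hA (X j) (hX j hj).1 (hX j hj).2
  refine ⟨fun i => (fun j => F j (α (i + 1))) '' Iio i, fun i hi => ?_, fun η hη => ?_⟩
  · calc _ ≤ #(Iio i) := mk_image_le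
      _ = lift i.card := mk_Iio_ordinal i
      _ ≤ lift (α i).card := lift_le.2 (Ordinal.card_le_card (hα.strictMonoOn.le_apply_of_lt hi))
  · refine mk_eq_of_forall_exists_le hκ (fun i hi => hi.1) fun b hb => ?_
    obtain ⟨_, ⟨i, hi, rfl⟩, hηi⟩ := mem_iUnion₂.1 (hF b hb hη)
    exact ⟨i, ⟨hi.2, _, ⟨b, hi.1, rfl⟩, hηi⟩, hi.1.le⟩

open Ordinal in
theorem smz_of_forall_exists_isSmallIntervalCover {κ : Cardinal.{0}} (hκ : κ.IsRegular)
    {A : Set (Ordinal.{0} → Bool)}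
    (h : ∀ α, SIC κ κ.ord α → ∃ Y, IsSmallIntervalCover κ α A Y) : SMZ κ A := by
  intro X hXκ hX
  have hstep : ∀ β, ∃ γ, β < γ ∧
      (β < κ.ord → γ < κ.ord ∧ lift β.card ≤ #(X ∩ Ioo β γ : Set Ordinal)) := by
    intro β
    by_cases hβ : β < κ.ord
    · obtain ⟨γ, hγ, hβγ, hcard⟩ := exists_lt_ord_lift_card_le_mk_inter_Ioo hκ hXκ hX hβ
      exact ⟨γ, hβγ, fun _ => ⟨hγ, hcard⟩⟩
    · -- any increasing step beyond `κ` makes `α` normal on all ordinals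
      exact ⟨β + 1, lt_add_one β, fun h => absurd h hβ⟩
  choose next hnext_gt hnext using hstep
  let α := transfiniteIterate next
  have hα_add_one : ∀ i, α (i + 1) = next (α i) := transfiniteIterate_add_one
  have hαn : IsNormal α := isNormal_transfiniteIterate hnext_gt
  have hακ : ∀ i < κ.ord, α i < κ.ord := fun i =>
    transfiniteIterate_lt_ord hκ fun β hβ => (hnext β hβ).1
  obtain ⟨Y, hYcard, hYcov⟩ := h α (hαn.sic hακ)
  have hdisj : (Iio κ.ord).PairwiseDisjoint fun i => X ∩ Ioo (α i) (α (i + 1)) := by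
    refine PairwiseDisjoint.mono (hαn.monotone.pairwise_disjoint_on_Ioo_succ.set_pairwise _)
      fun i => ?_
    simp only [succ_eq_add_one]
    exact inter_subset_right
  obtain ⟨f, hf⟩ := hdisj.exists_subset_image fun i hi =>
    (hYcard i hi).trans (hα_add_one i ▸ (hnext _ (hακ i hi)).2)
  refine ⟨f, fun η hη => ?_⟩
  obtain ⟨i, hi, y, hy, hηy⟩ :=
    mk_set_ne_zero_iff.1 ((hYcov η hη).trans_ne (lift_eq_zero.not.2 hκ.pos.ne'))
  obtain ⟨ξ, ⟨hξX, hξ⟩, rfl⟩ := hf i hi hy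
  exact mem_biUnion hξX fun j hj => hηy j (hj.trans hξ.2)

/-- for `κ = κ^{<κ}` uncountable, `A ⊆ ^κ2` has strong measure zero
iff for every strictly increasing continuous sequence `⟨α_i : i < κ⟩` of ordinals
below `κ` there are `Y_i ⊆ ^{α_{i+1}}2` with `|Y_i| ≤ |α_i|` such that every
`η ∈ A` satisfies `η ↾ α_{i+1} ∈ Y_i` for `κ` many `i`. -/
theorem smz_iff_small_interval_covers (κ : Cardinal.{0}) (hκ : ℵ₀ < κ)
    (hpow : κ ^< κ = κ) (A : Set (Ordinal.{0} → Bool)) :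
    SMZ κ A ↔
      ∀ α : Ordinal.{0} → Ordinal.{0}, SIC κ κ.ord α →
        ∃ Y : Ordinal.{0} → Set (Ordinal.{0} → Bool),
          (∀ i < κ.ord, #(Y i) ≤ Cardinal.lift.{1} (α i).card) ∧
          (∀ η ∈ A,
            #{i : Ordinal.{0} | i < κ.ord ∧ ∃ y ∈ Y i, ∀ j < α (i + 1), η j = y j}
              = Cardinal.lift.{1} κ) := by
  have hreg := Cardinal.isRegular_of_powerlt_self_eq hκ.le hpow
  exact ⟨fun hA _ hα => hA.exists_isSmallIntervalCover hreg hα,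
    smz_of_forall_exists_isSmallIntervalCover hreg⟩
end
end

section
/- Let $\kappa = \mu^+ = \kappa^{<\kappa}$ be an uncountable successor cardinal, and fix injections $F_i : {}^{i}2 \to \kappa$ for $i < \kappa$; write $\overline{F} \circ \eta$ for the function $i \mapsto F_i(\eta \upharpoonright i)$. Then $A \subseteq {}^{\kappa}2$ has strong measure zero if and only if for every $X \subseteq \kappa$ of cardinality $\kappa$ there is $f \in {}^{X}\kappa$ such that for every $\eta \in A$, the set $\{i \in X : f(i) \geq F_i(\eta \upharpoonright i)\}$ has cardinality $\kappa$. -/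
open Cardinal Set

noncomputable section

/-!
For `→`, cover every tail `X ∩ [β, κ)` by basic sets `[g_β ξ]` and let `f i` bound the codes
`F i (g_β i)` for `β ≤ i`; this is below `κ` by regularity. Each `η ∈ A` lies in some
`[g_β ξ]` with `β ≤ ξ ∈ X`, where its code is `F ξ (g_β ξ) ≤ f ξ`, so this happens
unboundedly often.

For `←`, cut `X` into `κ` blocks of `μ` consecutive elements, each followed by a point `a t` of
`X`, and apply the hypothesis to `{a t}`. As `f (a t) < μ⁺`, there are at most `μ` codes up to
`f (a t)`; decode them and spread the resulting patterns over the block below `a t`. An `η` whose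
code at `a t` is at most `f (a t)` agrees below `a t` with the pattern of that code, so it is
covered inside the block.
-/

universe u

theorem Set.exists_subset_image_of_mk_le {α β : Type u} [Nonempty β] {P : Set β} {B : Set α}
    (h : #P ≤ #B) : ∃ σ : α → β, P ⊆ σ '' B := by
  rcases P.eq_empty_or_nonempty with rfl | hP
  · exact ⟨fun _ => Classical.arbitrary β, empty_subset _⟩
  have := hP.to_subtype
  obtain ⟨e⟩ := h
  have he : Function.Injective fun p : P => (e p : α) := Subtype.val_injective.comp e.injective
  refine ⟨fun a => ((Function.invFun (fun p : P => (e p : α)) a : P) : β), fun b hb => ?_⟩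
  exact ⟨e ⟨b, hb⟩, (e _).2,
    congrArg Subtype.val (Function.leftInverse_invFun he ⟨b, hb⟩)⟩

theorem Set.PairwiseDisjoint.exists_forall_subset_image {ι : Type*} {α β : Type u} [Nonempty β]
    {s : Set ι} {B : ι → Set α} (hB : s.PairwiseDisjoint B) {P : ι → Set β}
    (hP : ∀ i ∈ s, #(P i) ≤ #(B i)) : ∃ g : α → β, ∀ i ∈ s, P i ⊆ g '' B i := by
  classical
  choose! σ hσ using fun i hi => exists_subset_image_of_mk_le (hP i hi)
  refine ⟨fun a => if h : ∃ i ∈ s, a ∈ B i then σ h.choose a else Classical.arbitrary β,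
    fun i hi b hb => ?_⟩
  obtain ⟨a, ha, rfl⟩ := hσ i hi hb
  have h : ∃ i ∈ s, a ∈ B i := ⟨i, hi, ha⟩
  have hi' : h.choose = i :=
    hB.elim h.choose_spec.1 hi (not_disjoint_iff.2 ⟨a, h.choose_spec.2, ha⟩)
  exact ⟨a, ha, by simp only [dif_pos h, hi']⟩

namespace Cardinal

variable {κ : Cardinal.{0}}

theorem mk_Iic_lt_lift_of_lt_ord (hκ : ℵ₀ ≤ κ) {i : Ordinal.{0}} (hi : i < κ.ord) :
    #(Iic i) < lift.{1} κ := by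
  rw [← Order.Iio_succ, mk_Iio_ordinal, lift_lt, ← lt_ord]
  exact (isSuccLimit_ord hκ).succ_lt hi

theorem mk_eq_lift_iff_forall_exists_le (hκ : κ.IsRegular) {S : Set Ordinal.{0}}
    (hS : S ⊆ Iio κ.ord) : #S = lift.{1} κ ↔ ∀ β < κ.ord, ∃ ξ ∈ S, β ≤ ξ := by
  constructor
  · intro hSc β hβ
    by_contra! hlt
    have : #S ≤ #(Iio β) := mk_le_mk_of_subset hlt
    rw [hSc, mk_Iio_ordinal, lift_le, ← not_lt, ← lt_ord] at this
    exact this hβ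
  · intro hub
    refine le_antisymm ?_ ?_
    · simpa [mk_Iio_ordinal] using mk_le_mk_of_subset hS
    · have hcof : IsCofinal {x : Iio κ.ord | (x : Ordinal) ∈ S} := fun x => by
        obtain ⟨ξ, hξS, hξ⟩ := hub x x.2
        exact ⟨⟨ξ, hS hξS⟩, hξS, hξ⟩
      calc lift.{1} κ = Order.cof (Iio κ.ord) := by
            rw [Ordinal.cof_Iio, ← Ordinal.lift_cof, hκ.cof_ord]
        _ ≤ #{x : Iio κ.ord | (x : Ordinal) ∈ S} := Order.cof_le hcof
        _ = #S := mk_preimage_of_injective_of_subset_range _ _ Subtype.val_injective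
            (by rwa [Subtype.range_coe])

theorem mk_inter_Ici_eq_lift (hκ : κ.IsRegular) {X : Set Ordinal.{0}} (hX : X ⊆ Iio κ.ord)
    (hXc : #X = lift.{1} κ) {β : Ordinal.{0}} (hβ : β < κ.ord) :
    #(X ∩ Ici β : Set Ordinal.{0}) = lift.{1} κ := by
  rw [mk_eq_lift_iff_forall_exists_le hκ (inter_subset_left.trans hX)]
  intro γ hγ
  obtain ⟨ξ, hξX, hξ⟩ :=
    (mk_eq_lift_iff_forall_exists_le hκ hX).1 hXc (max β γ) (max_lt hβ hγ)
  exact ⟨ξ, ⟨hξX, le_of_max_le_left hξ⟩, le_of_max_le_right hξ⟩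

end Cardinal

theorem SMZ.exists_frequently_code_le {κ : Cardinal.{0}} (hκ : κ.IsRegular)
    {F : Ordinal.{0} → (Ordinal.{0} → Bool) → Ordinal.{0}}
    (hF_lt : ∀ i < κ.ord, ∀ ν, F i ν < κ.ord)
    (hF_congr : ∀ i ν ν', (∀ j < i, ν j = ν' j) → F i ν = F i ν')
    {A : Set (Ordinal.{0} → Bool)} (hA : SMZ κ A) {X : Set Ordinal.{0}} (hX : X ⊆ Iio κ.ord)
    (hXc : #X = lift.{1} κ) :
    ∃ f : Ordinal.{0} → Ordinal.{0}, IntoKappa κ f ∧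
      ∀ η ∈ A, #{i : Ordinal.{0} | i ∈ X ∧ F i η ≤ f i} = lift.{1} κ := by
  choose! G hG using fun β (hβ : β < κ.ord) =>
    hA _ (inter_subset_left.trans hX) (mk_inter_Ici_eq_lift hκ hX hXc hβ)
  refine ⟨fun i => ⨆ β : Iic i, F i (G β i), fun i hi => ?_, fun η hη => ?_⟩
  · refine Ordinal.lift_iSup_lt_of_lt_cof ?_ fun β => hF_lt i hi _
    rw [← Ordinal.lift_cof, hκ.cof_ord, lift_uzero]
    exact mk_Iic_lt_lift_of_lt_ord hκ.aleph0_le hi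
  · rw [mk_eq_lift_iff_forall_exists_le hκ fun i hi => hX hi.1]
    intro β hβ
    obtain ⟨ξ, ⟨hξX, hβξ⟩, hηξ⟩ := mem_iUnion₂.1 (hG β hβ hη)
    refine ⟨ξ, ⟨hξX, ?_⟩, hβξ⟩
    calc F ξ η = F ξ (G β ξ) := hF_congr ξ η _ hηξ
      _ ≤ ⨆ γ : Iic ξ, F ξ (G γ ξ) :=
        le_ciSup (Ordinal.bddAbove_of_small (s := range _)) (⟨β, hβξ⟩ : Iic ξ)

theorem exists_strictMono_mem_of_mk_eq_lift {κ : Cardinal.{0}} {X : Set Ordinal.{0}}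
    (hX : X ⊆ Iio κ.ord) (hXc : #X = lift.{1} κ) :
    ∃ x : Ordinal.{0} → Ordinal.{0}, StrictMono x ∧ ∀ s < κ.ord, x s ∈ X := by
  have hY : ¬BddAbove (X ∪ Ici κ.ord) := fun ⟨b, hb⟩ =>
    have := hb (Or.inr ((le_max_right b κ.ord).trans (Order.le_succ _)))
    (Order.lt_succ (max b κ.ord)).not_ge (this.trans (le_max_left _ _))
  refine ⟨Ordinal.enumOrd _, Ordinal.enumOrd_strictMono hY, fun s hs => ?_⟩
  refine (Ordinal.enumOrd_mem hY s).resolve_right fun hκs => ?_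
  have hXs : X ⊆ Ordinal.enumOrd (X ∪ Ici κ.ord) '' Iio s := fun ξ hξ => by
    obtain ⟨s', rfl⟩ := Ordinal.enumOrd_surjective hY (Or.inl hξ)
    exact ⟨s', (Ordinal.enumOrd_lt_enumOrd hY).1 ((hX hξ).trans_le hκs), rfl⟩
  have := (mk_le_mk_of_subset hXs).trans mk_image_le
  rw [hXc, mk_Iio_ordinal, lift_le, ← not_lt, ← lt_ord] at this
  exact this hs

theorem exists_blocks_of_mk_eq_lift_succ {μ : Cardinal.{0}} (hμ : ℵ₀ ≤ μ)
    {X : Set Ordinal.{0}} (hX : X ⊆ Iio (Order.succ μ).ord)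
    (hXc : #X = lift.{1} (Order.succ μ)) :
    ∃ (a : Ordinal.{0} → Ordinal.{0}) (B : Ordinal.{0} → Set Ordinal.{0}),
      InjOn a (Iio (Order.succ μ).ord) ∧ (Iio (Order.succ μ).ord).PairwiseDisjoint B ∧
      ∀ t < (Order.succ μ).ord,
        a t ∈ X ∧ B t ⊆ X ∩ Iio (a t) ∧ #(B t) = lift.{1} μ := by
  obtain ⟨x, hx, hxX⟩ := exists_strictMono_mem_of_mk_eq_lift hX hXc
  have hm : μ.ord ≠ 0 := ord_eq_zero.not.2 (aleph0_pos.trans_le hμ).ne'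
  have hmul : ∀ t < (Order.succ μ).ord, μ.ord * Order.succ t < (Order.succ μ).ord := by
    intro t ht
    rw [lt_ord, Ordinal.card_mul, card_ord]
    refine mul_lt_of_lt (hμ.trans (Order.le_succ μ)) (Order.lt_succ μ) ?_
    exact lt_ord.1 ((isSuccLimit_ord (hμ.trans (Order.le_succ μ))).succ_lt ht)
  have hdiv : ∀ t α, α < μ.ord → (μ.ord * t + α) / μ.ord = t := fun t α hα => by
    rw [Ordinal.mul_add_div _ hm, Ordinal.div_eq_zero_of_lt hα, add_zero]
  refine ⟨fun t => x (μ.ord * Order.succ t),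
    fun t => (fun α => x (μ.ord * t + α)) '' Iio μ.ord, ?_, ?_,
    fun t ht => ⟨hxX _ (hmul t ht), ?_, ?_⟩⟩
  · intro t _ t' _ h
    exact Order.succ_injective (mul_left_cancel₀ hm (hx.injective h))
  · intro t _ t' _ htt'
    rw [Function.onFun, disjoint_left]
    rintro _ ⟨α, hα, rfl⟩ ⟨α', hα', h⟩
    have := congrArg (· / μ.ord) (hx.injective h)
    simp only [hdiv _ _ hα, hdiv _ _ hα'] at this
    exact htt' this.symm
  · rintro _ ⟨α, hα, rfl⟩
    have hlt : μ.ord * t + α < μ.ord * Order.succ t := by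
      rw [Ordinal.mul_succ]
      exact add_lt_add_right hα _
    exact ⟨hxX _ (hlt.trans (hmul t ht)), hx hlt⟩
  · have hinj : Function.Injective fun α => x (μ.ord * t + α) := fun α α' h =>
      add_left_cancel (hx.injective h)
    rw [mk_image_eq_of_injOn _ _ hinj.injOn, mk_Iio_ordinal, card_ord]

theorem smz_of_forall_exists_frequently_code_le {μ : Cardinal.{0}} (hμ : ℵ₀ ≤ μ)
    {F : Ordinal.{0} → (Ordinal.{0} → Bool) → Ordinal.{0}}
    (hF_inj : ∀ i < (Order.succ μ).ord, ∀ ν ν', F i ν = F i ν' → ∀ j < i, ν j = ν' j)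
    {A : Set (Ordinal.{0} → Bool)}
    (H : ∀ X : Set Ordinal.{0}, X ⊆ Iio (Order.succ μ).ord →
      #X = lift.{1} (Order.succ μ) →
      ∃ f : Ordinal.{0} → Ordinal.{0}, IntoKappa (Order.succ μ) f ∧
        ∀ η ∈ A, #{i : Ordinal.{0} | i ∈ X ∧ F i η ≤ f i} = lift.{1} (Order.succ μ)) :
    SMZ (Order.succ μ) A := by
  intro X hX hXc
  obtain ⟨a, B, ha, hB, haB⟩ := exists_blocks_of_mk_eq_lift_succ hμ hX hXc
  obtain ⟨f, hf, hfA⟩ := H (a '' Iio (Order.succ μ).ord)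
    (image_subset_iff.2 fun t ht => hX (haB t ht).1)
    (by rw [mk_image_eq_of_injOn _ _ ha, mk_Iio_ordinal, card_ord])
  obtain ⟨g, hg⟩ := hB.exists_forall_subset_image
    (P := fun t => Function.invFun (F (a t)) '' Iic (f (a t))) fun t ht =>
    calc #(Function.invFun (F (a t)) '' Iic (f (a t))) ≤ #(Iic (f (a t))) := mk_image_le
      _ ≤ lift.{1} μ := Order.lt_succ_iff.1 <| lift_succ μ ▸
          mk_Iic_lt_lift_of_lt_ord (hμ.trans (Order.le_succ μ)) (hf _ (hX (haB t ht).1))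
      _ = #(B t) := (haB t ht).2.2.symm
  refine ⟨g, fun η hη => ?_⟩
  obtain ⟨_, ⟨t, ht, rfl⟩, hle⟩ :
      {i | i ∈ a '' Iio (Order.succ μ).ord ∧ F i η ≤ f i}.Nonempty := by
    rw [← nonempty_coe_sort, ← mk_ne_zero_iff, hfA η hη]
    simp
  obtain ⟨ξ, hξ, hgξ⟩ := hg t ht ⟨F (a t) η, hle, rfl⟩
  have hcode := hF_inj _ (hX (haB t ht).1) _ _ (Function.invFun_eq ⟨η, rfl⟩)
  refine mem_iUnion₂.2 ⟨ξ, ((haB t ht).2.1 hξ).1, fun j hj => ?_⟩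
  rw [hgξ]
  exact (hcode j (hj.trans ((haB t ht).2.1 hξ).2)).symm

theorem smz_iff_not_dominating_general (κ μ : Cardinal.{0}) (hμ : κ = Order.succ μ)
    (hκ : ℵ₀ < κ)
    (F : Ordinal.{0} → (Ordinal.{0} → Bool) → Ordinal.{0}) (hF : CodingOK κ F)
    (A : Set (Ordinal.{0} → Bool)) :
    SMZ κ A ↔
      ∀ X : Set Ordinal.{0}, X ⊆ Set.Iio κ.ord → #X = Cardinal.lift.{1} κ →
        ∃ f : Ordinal.{0} → Ordinal.{0}, IntoKappa κ f ∧
          ∀ η ∈ A, #{i : Ordinal.{0} | i ∈ X ∧ F i η ≤ f i} = Cardinal.lift.{1} κ := by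
  subst hμ
  have hμ : ℵ₀ ≤ μ := Order.lt_succ_iff.1 hκ
  exact ⟨fun hA _ hX hXc => hA.exists_frequently_code_le (isRegular_succ hμ) hF.1 hF.2.1 hX hXc,
    smz_of_forall_exists_frequently_code_le hμ hF.2.2⟩

/-- for `κ = μ⁺ = κ^{<κ}` and fixed injections `F_i : ^i2 → κ`,
`A ⊆ ^κ2` has strong measure zero iff for every `X ⊆ κ` of cardinality `κ`
there is `f ∈ ^Xκ` such that for every `η ∈ A`, the set
`{i ∈ X : f i ≥ F_i (η ↾ i)}` has cardinality `κ`. -/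
theorem smz_iff_not_dominating (κ μ : Cardinal.{0}) (hμ : κ = Order.succ μ)
    (hκ : ℵ₀ < κ) (hpow : κ ^< κ = κ)
    (F : Ordinal.{0} → (Ordinal.{0} → Bool) → Ordinal.{0}) (hF : CodingOK κ F)
    (A : Set (Ordinal.{0} → Bool)) :
    SMZ κ A ↔
      ∀ X : Set Ordinal.{0}, X ⊆ Set.Iio κ.ord → #X = Cardinal.lift.{1} κ →
        ∃ f : Ordinal.{0} → Ordinal.{0}, IntoKappa κ f ∧
          ∀ η ∈ A, #{i : Ordinal.{0} | i ∈ X ∧ F i η ≤ f i} = Cardinal.lift.{1} κ :=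
  smz_iff_not_dominating_general κ μ hμ hκ F hF A

end
end

section
/- Assume $\kappa = \kappa^{<\kappa}$ is regular uncountable and every family of at most $\gamma$ functions in ${}^{\kappa}\kappa$ is bounded with respect to $<^*_{\kappa}$ (i.e., the bounding number $\mathbf{b}$ of $({}^{\kappa}\kappa, <^*_{\kappa})$ exceeds $\gamma$), where $\kappa = \mu^+$ and injections $F_i : {}^{i}2 \to \kappa$ are fixed. Then the union of any $\gamma$-indexed family of strong measure zero subsets of ${}^{\kappa}2$ has strong measure zero. -/
open Cardinal Set

noncomputable section

/-! Enumerate `X` increasingly by `e` and put `y δ = e (μ * (δ + 1))`. Covering `A ξ` along every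
tail of `y` and taking, at each `i`, the supremum of the codes `F i` of the `≤ μ` patterns used
there gives `f_ξ ∈ ^κκ` such that every `η ∈ A ξ` has `F (y δ) η ≤ f_ξ (y δ)` for cofinally many
`δ`. Since `𝐛 > γ`, one `g` eventually dominates every `f_ξ`, so each `η` in the union has a
level `δ` with `F (y δ) η < g (y δ)`. The block `e (μ * δ + c)`, `c < μ`, of `X` below `y δ` has
room for all `|g (y δ)| ≤ μ` codes, and placing at the slot of each code the pattern it codes
covers the union, because `F (y δ)` is injective on `^(y δ)2`. -/

theorem cyl_subset_cyl {β β' : Ordinal.{0}} (h : β ≤ β') (ν : Ordinal.{0} → Bool) :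
    cyl β' ν ⊆ cyl β ν :=
  fun _ hη i hi => hη i (hi.trans_le h)

theorem Cardinal.IsRegular.sSup_lt_ord {κ : Cardinal.{0}} (hκ : κ.IsRegular)
    {s : Set Ordinal.{0}} (hs : ∀ i ∈ s, i < κ.ord) (h : #s < Cardinal.lift.{1} κ) :
    sSup s < κ.ord :=
  Ordinal.sSup_lt_of_lt_cof (by rwa [Cardinal.lift_ord, hκ.lift.cof_ord]) hs

theorem Cardinal.IsRegular.exists_lt_of_mk_lt {κ : Cardinal.{0}} (hκ : κ.IsRegular)
    {s : Set Ordinal.{0}} (hs : ∀ i ∈ s, i < κ.ord) (h : #s < Cardinal.lift.{1} κ) :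
    ∃ b < κ.ord, ∀ i ∈ s, i ≤ b :=
  ⟨sSup s, hκ.sSup_lt_ord hs h, fun _ hi => le_csSup ⟨κ.ord, fun i hi => (hs i hi).le⟩ hi⟩

theorem mk_Iic_lt_of_lt_ord {κ : Cardinal.{0}} (hκ : ℵ₀ ≤ κ) {i : Ordinal.{0}} (hi : i < κ.ord) :
    #(Iic i) < Cardinal.lift.{1} κ := by
  rw [← Order.Iio_succ, Cardinal.mk_Iio_ordinal, Cardinal.lift_lt, ← lt_ord]
  exact (isSuccLimit_ord hκ).succ_lt hi

theorem LtStar.exists_forall_lt {κ : Cardinal.{0}} (hκ : κ.IsRegular)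
    {f g : Ordinal.{0} → Ordinal.{0}} (h : LtStar κ f g) :
    ∃ b < κ.ord, ∀ i < κ.ord, b < i → f i < g i := by
  obtain ⟨b, hbκ, hb⟩ := hκ.exists_lt_of_mk_lt (s := {i | i ∈ Iio κ.ord ∧ g i ≤ f i})
    (fun i hi => hi.1) h
  exact ⟨b, hbκ, fun i hi hbi => not_le.mp fun hgf => (hb i ⟨hi, hgf⟩).not_gt hbi⟩

theorem Ordinal.mul_add_inj {a a' b c c' : Ordinal} (hc : c < b) (hc' : c' < b)
    (h : b * a + c = b * a' + c') : a = a' ∧ c = c' := by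
  have hb : b ≠ 0 := (zero_le.trans_lt hc).ne'
  have hdiv := congrArg (· / b) h
  have hmod := congrArg (· % b) h
  simp only [mul_add_div _ hb, div_eq_zero_of_lt hc, div_eq_zero_of_lt hc', mul_add_mod_self,
    mod_eq_of_lt hc, mod_eq_of_lt hc', add_zero] at hdiv hmod
  exact ⟨hdiv, hmod⟩

theorem Ordinal.exists_injOn_Iio {a b : Ordinal.{0}} (h : a.card ≤ b.card) :
    ∃ φ : Ordinal.{0} → Ordinal.{0}, MapsTo φ (Iio a) (Iio b) ∧ InjOn φ (Iio a) := by
  classical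
  have : #(Iio a) ≤ #(Iio b) := by
    rw [Cardinal.mk_Iio_ordinal, Cardinal.mk_Iio_ordinal]; exact Cardinal.lift_le.mpr h
  obtain ⟨φ⟩ := this
  refine ⟨fun j => if hj : j < a then φ ⟨j, hj⟩ else 0, fun j hj => ?_, fun j hj j' hj' hjj => ?_⟩
  · simp only [dif_pos (show j < a from hj)]; exact (φ _).2
  · simp only [dif_pos (show j < a from hj), dif_pos (show j' < a from hj')] at hjj
    exact congrArg Subtype.val (φ.injective (Subtype.ext hjj))

theorem exists_strictMono_mem_of_mk_eq {κ : Cardinal.{0}} {X : Set Ordinal.{0}}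
    (hX : X ⊆ Iio κ.ord) (hXc : #X = Cardinal.lift.{1} κ) :
    ∃ e : Ordinal.{0} → Ordinal.{0}, StrictMono e ∧ ∀ α < κ.ord, e α ∈ X := by
  -- padding `X` by a final segment makes it unbounded, so that `enumOrd` enumerates it
  set S := X ∪ Ici κ.ord
  have hS : ¬ BddAbove S := fun ⟨b, hb⟩ =>
    (Order.lt_succ (max b κ.ord)).not_ge
      ((hb (Or.inr (le_max_right b κ.ord |>.trans (Order.le_succ _)))).trans (le_max_left _ _))
  have he := Ordinal.enumOrd_strictMono hS
  refine ⟨Ordinal.enumOrd S, he, fun α hα => ?_⟩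
  refine (Ordinal.enumOrd_mem hS α).resolve_right fun hκα => ?_
  have hXα : X ⊆ Ordinal.enumOrd S '' Iio α := by
    intro x hx
    obtain ⟨a, rfl⟩ : x ∈ range (Ordinal.enumOrd S) := by
      rw [Ordinal.range_enumOrd hS]; exact Or.inl hx
    exact ⟨a, he.lt_iff_lt.mp ((hX hx).trans_le hκα), rfl⟩
  have : Cardinal.lift.{1} κ ≤ Cardinal.lift.{1} α.card := by
    rw [← hXc, ← Cardinal.mk_Iio_ordinal]
    exact (mk_le_mk_of_subset hXα).trans mk_image_le
  exact (Cardinal.lift_le.mp this).not_gt (lt_ord.mp hα)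

def level (ρ : Ordinal.{0}) (e : Ordinal.{0} → Ordinal.{0}) (δ : Ordinal.{0}) : Ordinal.{0} :=
  e (ρ * (δ + 1))

section Blocks

variable {κ μ : Cardinal.{0}} {X : Set Ordinal.{0}} {e : Ordinal.{0} → Ordinal.{0}}

theorem mul_add_one_lt_ord (hμ : κ = Order.succ μ) (hμ₀ : ℵ₀ ≤ μ) {δ : Ordinal.{0}}
    (hδ : δ < κ.ord) : μ.ord * (δ + 1) < κ.ord := by
  have hκ₀ : ℵ₀ ≤ κ := hμ ▸ hμ₀.trans (Order.le_succ μ)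
  exact Ordinal.isPrincipal_mul_ord hκ₀ (ord_lt_ord.mpr (hμ ▸ Order.lt_succ μ))
    ((isSuccLimit_ord hκ₀).add_one_lt hδ)

theorem level_strictMono (hμ₀ : ℵ₀ ≤ μ) (he : StrictMono e) : StrictMono (level μ.ord e) := by
  have hpos : 0 < μ.ord := ord_pos.mpr (aleph0_pos.trans_le hμ₀)
  exact he.comp fun a b hab =>
    (mul_lt_mul_iff_right₀ hpos).mpr ((Order.add_one_le_of_lt hab).trans_lt (lt_add_one b))

theorem level_mem (hμ : κ = Order.succ μ) (hμ₀ : ℵ₀ ≤ μ) (heX : ∀ α < κ.ord, e α ∈ X)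
    {δ : Ordinal.{0}} (hδ : δ < κ.ord) : level μ.ord e δ ∈ X :=
  heX _ (mul_add_one_lt_ord hμ hμ₀ hδ)

theorem exists_slots (hμ : κ = Order.succ μ) (hμ₀ : ℵ₀ ≤ μ) (he : StrictMono e)
    (heX : ∀ α < κ.ord, e α ∈ X) {b : Ordinal.{0} → Ordinal.{0}} (hb : ∀ δ < κ.ord, b δ < κ.ord) :
    ∃ slot : Ordinal.{0} × Ordinal.{0} → Ordinal.{0},
      (∀ δ < κ.ord, ∀ j < b δ, slot (δ, j) ∈ X ∧ slot (δ, j) < level μ.ord e δ) ∧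
      InjOn slot {p | p.1 < κ.ord ∧ p.2 < b p.1} := by
  have hemb : ∀ δ, ∃ φ : Ordinal.{0} → Ordinal.{0}, δ < κ.ord →
      MapsTo φ (Iio (b δ)) (Iio μ.ord) ∧ InjOn φ (Iio (b δ)) := by
    intro δ
    by_cases hδ : δ < κ.ord
    · have hcard : (b δ).card ≤ μ.ord.card := by
        rw [card_ord, ← Order.lt_succ_iff, ← hμ, ← lt_ord]; exact hb δ hδ
      obtain ⟨φ, hφ⟩ := Ordinal.exists_injOn_Iio hcard
      exact ⟨φ, fun _ => hφ⟩
    · exact ⟨id, fun h => absurd h hδ⟩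
  choose φ hφ using hemb
  have hblock : ∀ δ < κ.ord, ∀ j < b δ, μ.ord * δ + φ δ j < μ.ord * (δ + 1) := fun δ hδ j hj => by
    rw [mul_add_one]; exact add_lt_add_right (show φ δ j < μ.ord from (hφ δ hδ).1 hj) _
  refine ⟨fun p => e (μ.ord * p.1 + φ p.1 p.2), fun δ hδ j hj => ⟨?_, ?_⟩, ?_⟩
  · exact heX _ ((hblock δ hδ j hj).trans (mul_add_one_lt_ord hμ hμ₀ hδ))
  · exact he (hblock δ hδ j hj)
  · rintro ⟨δ, j⟩ ⟨hδ, hj⟩ ⟨δ', j'⟩ ⟨hδ', hj'⟩ h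
    obtain ⟨rfl, hφj⟩ := Ordinal.mul_add_inj ((hφ δ hδ).1 hj) ((hφ δ' hδ').1 hj') (he.injective h)
    exact congrArg _ ((hφ δ hδ).2 hj hj' hφj)

end Blocks

theorem exists_pattern_per_slot {ι : Type*} {D : Set ι} (slot len : ι → Ordinal.{0})
    (p : ι → Ordinal.{0} → Bool)
    (h : ∀ r ∈ D, ∀ r' ∈ D, slot r = slot r' → ∀ k < len r, p r k = p r' k) :
    ∃ q : Ordinal.{0} → Ordinal.{0} → Bool, ∀ r ∈ D, p r ∈ cyl (len r) (q (slot r)) := by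
  classical
  refine ⟨fun ξ => if hξ : ∃ r ∈ D, slot r = ξ then p hξ.choose else fun _ => false,
    fun r hr k hk => ?_⟩
  have hex : ∃ r' ∈ D, slot r' = slot r := ⟨r, hr, rfl⟩
  simp only [dif_pos hex]
  exact h r hr _ hex.choose_spec.1 hex.choose_spec.2.symm k hk

section Coding

variable {κ : Cardinal.{0}} {F : Ordinal.{0} → (Ordinal.{0} → Bool) → Ordinal.{0}}

theorem SMZ.exists_frequently_code_le_s11 {A : Set (Ordinal.{0} → Bool)} (hA : SMZ κ A)
    (hκ : κ.IsRegular) (hF : CodingOK κ F)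
    {y : Ordinal.{0} → Ordinal.{0}} (hy : StrictMono y) (hyκ : ∀ δ < κ.ord, y δ < κ.ord) :
    ∃ f, IntoKappa κ f ∧
      ∀ η ∈ A, ∀ β < κ.ord, ∃ δ, β ≤ δ ∧ δ < κ.ord ∧ F (y δ) η ≤ f (y δ) := by
  have hκ₀ := hκ.aleph0_le
  have hadd : ∀ {β δ}, β < κ.ord → δ < κ.ord → β + δ < κ.ord :=
    fun hβ hδ => Ordinal.isPrincipal_add_ord hκ₀ hβ hδ
  have hcover : ∀ β, ∃ P : Ordinal.{0} → Ordinal.{0} → Bool, β < κ.ord →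
      A ⊆ ⋃ ξ ∈ (fun δ => y (β + δ)) '' Iio κ.ord, cyl ξ (P ξ) := by
    intro β
    by_cases hβ : β < κ.ord
    · have hinj : InjOn (fun δ => y (β + δ)) (Iio κ.ord) :=
        ((hy.comp fun _ _ h => add_lt_add_right h β).injective).injOn
      have hsub : (fun δ => y (β + δ)) '' Iio κ.ord ⊆ Iio κ.ord := by
        rintro _ ⟨δ, hδ, rfl⟩; exact hyκ _ (hadd hβ hδ)
      obtain ⟨P, hP⟩ := hA _ hsub
        (by rw [mk_image_eq_of_injOn _ _ hinj, Cardinal.mk_Iio_ordinal, card_ord])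
      exact ⟨P, fun _ => hP⟩
    · exact ⟨fun _ _ => false, fun h => absurd h hβ⟩
  choose P hP using hcover
  refine ⟨fun i => sSup ((fun β => F i (P β i)) '' Iic i), fun i hi => ?_, ?_⟩
  · refine hκ.sSup_lt_ord ?_ (mk_image_le.trans_lt (mk_Iic_lt_of_lt_ord hκ₀ hi))
    rintro _ ⟨β, -, rfl⟩
    exact hF.1 i hi _
  · intro η hη β hβ
    obtain ⟨_, ⟨δ, hδ, rfl⟩, hηP⟩ := mem_iUnion₂.mp (hP β hβ hη)
    have hβy : β ≤ y (β + δ) := le_self_add.trans hy.le_apply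
    refine ⟨β + δ, le_self_add, hadd hβ hδ, ?_⟩
    rw [hF.2.1 _ _ _ hηP]
    exact le_csSup Ordinal.bddAbove_of_small ⟨β, hβy, rfl⟩

end Coding

theorem exists_cover_of_code_lt {κ μ : Cardinal.{0}} (hμ : κ = Order.succ μ) (hμ₀ : ℵ₀ ≤ μ)
    {F : Ordinal.{0} → (Ordinal.{0} → Bool) → Ordinal.{0}} (hF : CodingOK κ F)
    {X : Set Ordinal.{0}} (hX : X ⊆ Iio κ.ord) {e : Ordinal.{0} → Ordinal.{0}}
    (he : StrictMono e) (heX : ∀ α < κ.ord, e α ∈ X)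
    {g : Ordinal.{0} → Ordinal.{0}} (hg : IntoKappa κ g) :
    ∃ q : Ordinal.{0} → Ordinal.{0} → Bool, ∀ η, ∀ δ < κ.ord,
      F (level μ.ord e δ) η < g (level μ.ord e δ) → η ∈ ⋃ ξ ∈ X, cyl ξ (q ξ) := by
  set y := level μ.ord e
  have hyκ : ∀ δ < κ.ord, y δ < κ.ord := fun δ hδ => hX (level_mem hμ hμ₀ heX hδ)
  obtain ⟨slot, hslot, hinj⟩ := exists_slots hμ hμ₀ he heX (b := g ∘ y)
    fun δ hδ => hg _ (hyκ δ hδ)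
  obtain ⟨q, hq⟩ := exists_pattern_per_slot
    (D := {r : Ordinal.{0} × (Ordinal.{0} → Bool) | r.1 < κ.ord ∧ F (y r.1) r.2 < g (y r.1)})
    (fun r => slot (r.1, F (y r.1) r.2)) (fun r => y r.1) Prod.snd (by
      rintro ⟨δ, η⟩ ⟨hδ, hη⟩ ⟨δ', η'⟩ ⟨hδ', hη'⟩ h
      obtain ⟨rfl, hcode⟩ := Prod.ext_iff.mp (hinj ⟨hδ, hη⟩ ⟨hδ', hη'⟩ h)
      exact hF.2.2 _ (hyκ δ hδ) _ _ hcode)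
  refine ⟨q, fun η δ hδ hcode => mem_iUnion₂.mpr ⟨_, (hslot δ hδ _ hcode).1, ?_⟩⟩
  exact cyl_subset_cyl (hslot δ hδ _ hcode).2.le _ (hq (δ, η) ⟨hδ, hcode⟩)

theorem smz_additivity_of_bounding_general (κ μ γ : Cardinal.{0}) (hμ : κ = Order.succ μ)
    (hκ : ℵ₀ < κ)
    (F : Ordinal.{0} → (Ordinal.{0} → Bool) → Ordinal.{0}) (hF : CodingOK κ F)
    (hb : ∀ G : Set (Ordinal.{0} → Ordinal.{0}), (∀ f ∈ G, IntoKappa κ f) →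
      #G ≤ Cardinal.lift.{1} γ → BoundedFam κ G)
    (A : Ordinal.{0} → Set (Ordinal.{0} → Bool)) (hA : ∀ ξ < γ.ord, SMZ κ (A ξ)) :
    SMZ κ (⋃ ξ ∈ Set.Iio γ.ord, A ξ) := by
  have hμ₀ : ℵ₀ ≤ μ := Order.lt_succ_iff.mp (hμ ▸ hκ)
  have hreg : κ.IsRegular := hμ ▸ isRegular_succ hμ₀
  intro X hX hXc
  obtain ⟨e, he, heX⟩ := exists_strictMono_mem_of_mk_eq hX hXc
  set y := level μ.ord e
  have hy : StrictMono y := level_strictMono hμ₀ he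
  have hyκ : ∀ δ < κ.ord, y δ < κ.ord := fun δ hδ => hX (level_mem hμ hμ₀ heX hδ)
  choose f hfκ hf using fun α : Iio γ.ord =>
    (hA α α.2).exists_frequently_code_le_s11 hreg hF hy hyκ
  obtain ⟨g, hgκ, hg⟩ := hb (range f) (forall_mem_range.mpr hfκ)
    (mk_range_le.trans_eq (by rw [Cardinal.mk_Iio_ordinal, card_ord]))
  obtain ⟨q, hq⟩ := exists_cover_of_code_lt hμ hμ₀ hF hX he heX hgκ
  refine ⟨q, fun η hη => ?_⟩
  obtain ⟨α, hα, hηα⟩ := mem_iUnion₂.mp hη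
  obtain ⟨b, hbκ, hfg⟩ := (hg _ (mem_range_self ⟨α, hα⟩)).exists_forall_lt hreg
  obtain ⟨δ, hbδ, hδκ, hcode⟩ :=
    hf ⟨α, hα⟩ η hηα _ ((isSuccLimit_ord hreg.aleph0_le).succ_lt hbκ)
  have hby : b < y δ := (Order.lt_succ b).trans_le (hbδ.trans hy.le_apply)
  exact hq η δ hδκ (hcode.trans_lt (hfg _ (hyκ δ hδκ) hby))

/-- if `κ = μ⁺ = κ^{<κ}` and every family of at most `γ` functions
in `^κκ` is `<*`-bounded (i.e. `𝐛 > γ`), then the union of any `γ`-indexed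
family of strong measure zero subsets of `^κ2` has strong measure zero. -/
theorem smz_additivity_of_bounding (κ μ γ : Cardinal.{0}) (hμ : κ = Order.succ μ)
    (hκ : ℵ₀ < κ) (hpow : κ ^< κ = κ)
    (F : Ordinal.{0} → (Ordinal.{0} → Bool) → Ordinal.{0}) (hF : CodingOK κ F)
    (hb : ∀ G : Set (Ordinal.{0} → Ordinal.{0}), (∀ f ∈ G, IntoKappa κ f) →
      #G ≤ Cardinal.lift.{1} γ → BoundedFam κ G)
    (A : Ordinal.{0} → Set (Ordinal.{0} → Bool)) (hA : ∀ ξ < γ.ord, SMZ κ (A ξ)) :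
    SMZ κ (⋃ ξ ∈ Set.Iio γ.ord, A ξ) :=
  smz_additivity_of_bounding_general κ μ γ hμ hκ F hF hb A hA

end
end

section
/- Let $\kappa = \mu^+ = \kappa^{<\kappa}$ be uncountable and suppose the dominating number of $({}^{\kappa}\kappa, <^*_{\kappa})$ is strictly greater than $\kappa^+$. Then every subset $A \subseteq {}^{\kappa}2$ of cardinality $\kappa^+$ has strong measure zero; in particular the generalized Borel conjecture fails. -/
open Cardinal Set

noncomputable section

/-!
Given `X ⊆ κ` of size `κ`, enumerate it as `κ` disjoint blocks of size `μ`; as `κ = μ⁺` is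
regular, block `i` lies below some `Q i < κ`. Code `η ∈ A` by `i ↦ F (Q i) η`, i.e. by its
initial segments of length `Q i`. These `κ⁺ < 𝔡` codes do not dominate, so some `g` is not
dominated by any of them: every `η` has an `i` whose code value is `≤ g i`. There are only `μ`
such values, so each gets its own point `ξ` of block `i`, and `f ξ` may be any `η'` sharing that
code value: then `η` and `η'` agree below `Q i > ξ`.
-/

universe u v

theorem exists_mapsTo_injOn_of_mk_le {α β : Type u} [Nonempty β] {s : Set α} {t : Set β}
    (h : #s ≤ #t) : ∃ f : α → β, MapsTo f s t ∧ InjOn f s := by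
  obtain ⟨e⟩ := h
  obtain ⟨f, hf⟩ : ∃ f : α → β, ∀ x : s, f x = e x := by
    classical
    exact ⟨fun x => if hx : x ∈ s then e ⟨x, hx⟩ else Classical.arbitrary β, fun x => dif_pos x.2⟩
  refine ⟨f, fun x hx => hf ⟨x, hx⟩ ▸ (e ⟨x, hx⟩).2, fun x hx y hy hxy => ?_⟩
  rw [hf ⟨x, hx⟩, hf ⟨y, hy⟩] at hxy
  exact congrArg Subtype.val (e.injective (Subtype.ext hxy))

theorem exists_lt_ord_forall_lt {κ : Cardinal.{u}} (hκ : κ.IsRegular) {ι : Type v}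
    {f : ι → Ordinal.{u}} (hι : lift.{u} #ι < lift.{v} κ) (hf : ∀ i, f i < κ.ord) :
    ∃ Q < κ.ord, ∀ i, f i < Q := by
  have hbdd : BddAbove (range fun i => f i + 1) :=
    ⟨κ.ord, by rintro _ ⟨i, rfl⟩; exact Order.add_one_le_of_lt (hf i)⟩
  refine ⟨⨆ i, f i + 1, Ordinal.lift_iSup_add_one_lt_of_lt_cof ?_ hf, fun i => ?_⟩
  · rwa [← Ordinal.lift_cof, hκ.cof_ord]
  · exact (Order.lt_add_one_iff.mpr le_rfl).trans_le (le_ciSup hbdd i)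

theorem exists_mapsTo_injOn_Iic_Iio {μ : Cardinal.{0}} (hμ : ℵ₀ ≤ μ) {t : Ordinal.{0}}
    (ht : t < (Order.succ μ).ord) :
    ∃ ι : Ordinal.{0} → Ordinal.{0}, MapsTo ι (Iic t) (Iio μ.ord) ∧ InjOn ι (Iic t) := by
  refine exists_mapsTo_injOn_of_mk_le ?_
  rw [← Order.Iio_succ, Cardinal.mk_Iio_ordinal, Cardinal.mk_Iio_ordinal, Cardinal.card_ord,
    Cardinal.lift_le, ← Order.lt_succ_iff, ← Cardinal.lt_ord]
  exact (Cardinal.isSuccLimit_ord (hμ.trans (Order.le_succ μ))).succ_lt ht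

theorem mk_Iio_ord_prod_Iio_ord (κ μ : Cardinal.{u}) :
    #(Iio κ.ord ×ˢ Iio μ.ord) = lift.{u + 1} (κ * μ) := by
  rw [Cardinal.mk_congr (Equiv.Set.prod _ _), Cardinal.mk_prod, Cardinal.mk_Iio_ordinal,
    Cardinal.mk_Iio_ordinal]
  simp

theorem exists_bounded_blocks {μ : Cardinal.{0}} (hμ : ℵ₀ ≤ μ) {X : Set Ordinal.{0}}
    (hX : X ⊆ Iio (Order.succ μ).ord) (hXcard : #X = lift.{1} (Order.succ μ)) :
    ∃ p : Ordinal.{0} × Ordinal.{0} → Ordinal.{0}, ∃ Q : Ordinal.{0} → Ordinal.{0},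
      MapsTo p (Iio (Order.succ μ).ord ×ˢ Iio μ.ord) X ∧
      InjOn p (Iio (Order.succ μ).ord ×ˢ Iio μ.ord) ∧
      ∀ i < (Order.succ μ).ord, Q i < (Order.succ μ).ord ∧ ∀ j < μ.ord, p (i, j) < Q i := by
  have hκ : ℵ₀ ≤ Order.succ μ := hμ.trans (Order.le_succ μ)
  obtain ⟨p, hpX, hpinj⟩ := exists_mapsTo_injOn_of_mk_le
    (s := Iio (Order.succ μ).ord ×ˢ Iio μ.ord) (t := X) <| by
    rw [mk_Iio_ord_prod_Iio_ord, Cardinal.mul_eq_left hκ (Order.le_succ μ)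
      (Cardinal.aleph0_pos.trans_le hμ).ne', hXcard]
  have hQ : ∀ i < (Order.succ μ).ord,
      ∃ Q < (Order.succ μ).ord, ∀ j : Iio μ.ord, p (i, j) < Q := fun i hi =>
    exists_lt_ord_forall_lt (Cardinal.isRegular_succ hμ) (by simp [Cardinal.mk_Iio_ordinal])
      fun j => hX (hpX ⟨hi, j.2⟩)
  choose! Q hQ hpQ using hQ
  exact ⟨p, Q, hpX, hpinj, fun i hi => ⟨hQ i hi, fun j hj => hpQ i hi ⟨j, hj⟩⟩⟩

theorem exists_codingOK {κ : Cardinal.{0}} (hκ : 2 ≤ κ) (hpow : κ ^< κ = κ) :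
    ∃ F, CodingOK κ F := by
  have hcode : ∀ i < κ.ord, ∃ c : (Iio i → Bool) → Ordinal.{0},
      MapsTo c univ (Iio κ.ord) ∧ InjOn c univ := by
    intro i hi
    refine exists_mapsTo_injOn_of_mk_le ?_
    have h2i : 2 ^ i.card ≤ κ := hpow ▸ (Cardinal.power_le_power_right hκ).trans
      (Cardinal.le_powerlt κ (Cardinal.lt_ord.mp hi))
    simpa [Cardinal.mk_arrow, Cardinal.mk_Iio_ordinal] using Cardinal.lift_le.{1}.mpr h2i
  choose! c hc hcinj using hcode
  refine ⟨fun i ν => c i fun j => ν j, fun i hi ν => hc i hi (mem_univ _),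
    fun i ν ν' h => congrArg (c i) (funext fun j => h j j.2), fun i hi ν ν' h j hj => ?_⟩
  exact congrFun (injOn_univ.mp (hcinj i hi) h) ⟨j, hj⟩

theorem exists_forall_exists_le_of_not_dominatingFam {κ : Cardinal.{0}} (hκ : κ ≠ 0)
    {G : Set (Ordinal.{0} → Ordinal.{0})} (hG : ¬ DominatingFam κ G) :
    ∃ g, IntoKappa κ g ∧ ∀ f ∈ G, ∃ i < κ.ord, f i ≤ g i := by
  simp only [DominatingFam, LtStar, LtStarOn, not_forall, not_exists, not_and] at hG
  obtain ⟨g, hg, hGg⟩ := hG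
  refine ⟨g, hg, fun f hf => ?_⟩
  by_contra! hfg
  apply hGg f hf
  have hempty : {i | i ∈ Iio κ.ord ∧ f i ≤ g i} = ∅ :=
    eq_empty_of_forall_notMem fun i ⟨hi, hle⟩ => (hfg i hi).not_ge hle
  rw [hempty]
  simpa [pos_iff_ne_zero] using hκ

theorem exists_subset_biUnion_cyl {A : Set (Ordinal.{0} → Bool)} {X : Set Ordinal.{0}}
    (φ : (Ordinal.{0} → Bool) → Ordinal.{0}) (hφX : MapsTo φ A X)
    (hφ : ∀ η ∈ A, ∀ η' ∈ A, φ η = φ η' → ∀ k < φ η, η k = η' k) :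
    ∃ f : Ordinal.{0} → Ordinal.{0} → Bool, A ⊆ ⋃ ξ ∈ X, cyl ξ (f ξ) := by
  classical
  refine ⟨fun ξ => if h : ∃ η ∈ A, φ η = ξ then h.choose else fun _ => false,
    fun η hη => mem_biUnion (hφX hη) fun k hk => ?_⟩
  have h : ∃ η' ∈ A, φ η' = φ η := ⟨η, hη, rfl⟩
  obtain ⟨hA, hφη⟩ := h.choose_spec
  dsimp only
  rw [dif_pos h]
  exact hφ η hη _ hA hφη.symm k hk

theorem smz_of_not_dominatingFam {μ : Cardinal.{0}} (hμ : ℵ₀ ≤ μ)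
    {F : Ordinal.{0} → (Ordinal.{0} → Bool) → Ordinal.{0}} (hF : CodingOK (Order.succ μ) F)
    {A : Set (Ordinal.{0} → Bool)}
    (hA : ∀ c : (Ordinal.{0} → Bool) → Ordinal.{0} → Ordinal.{0},
      (∀ η, IntoKappa (Order.succ μ) (c η)) → ¬ DominatingFam (Order.succ μ) (c '' A)) :
    SMZ (Order.succ μ) A := by
  intro X hX hXcard
  obtain ⟨p, Q, hpX, hpinj, hQ⟩ := exists_bounded_blocks hμ hX hXcard
  obtain ⟨g, hg, hit⟩ := exists_forall_exists_le_of_not_dominatingFam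
    (Cardinal.aleph0_pos.trans_le (hμ.trans (Order.le_succ μ))).ne'
    (hA (fun η i => F (Q i) η) fun η i hi => hF.1 _ (hQ i hi).1 η)
  have hit : ∀ η ∈ A, ∃ i < (Order.succ μ).ord, F (Q i) η ≤ g i :=
    fun η hη => hit _ (mem_image_of_mem _ hη)
  choose! idx hidx hle using hit
  have hι := fun i (hi : i < (Order.succ μ).ord) => exists_mapsTo_injOn_Iic_Iio hμ (hg i hi)
  choose! ι hιmaps hιinj using hι
  have hblock : ∀ η ∈ A, (idx η, ι (idx η) (F (Q (idx η)) η)) ∈ Iio _ ×ˢ Iio μ.ord :=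
    fun η hη => ⟨hidx η hη, hιmaps _ (hidx η hη) (hle η hη)⟩
  refine exists_subset_biUnion_cyl (fun η => p (idx η, ι (idx η) (F (Q (idx η)) η)))
    (fun η hη => hpX (hblock η hη)) fun η hη η' hη' heq k hk => ?_
  obtain ⟨hidx_eq, hιeq⟩ := Prod.ext_iff.mp (hpinj (hblock η hη) (hblock η' hη') heq)
  dsimp only at hidx_eq hιeq hk
  rw [← hidx_eq] at hιeq
  have hcode : F (Q (idx η)) η = F (Q (idx η)) η' :=
    hιinj _ (hidx η hη) (hle η hη) (hidx_eq ▸ hle η' hη') hιeq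
  exact hF.2.2 _ (hQ _ (hidx η hη)).1 η η' hcode k
    (hk.trans ((hQ _ (hidx η hη)).2 _ (hιmaps _ (hidx η hη) (hle η hη))))

/-- if `κ = μ⁺ = κ^{<κ}` and the dominating number of
`(^κκ, <*_κ)` is `> κ⁺` (no family of size `≤ κ⁺` is dominating), then every
`A ⊆ ^κ2` of cardinality `κ⁺` has strong measure zero; in particular the
generalized Borel conjecture fails. -/
theorem gbc_fails_of_d_large (κ μ : Cardinal.{0}) (hμ : κ = Order.succ μ)
    (hκ : ℵ₀ < κ) (hpow : κ ^< κ = κ)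
    (hd : ∀ G : Set (Ordinal.{0} → Ordinal.{0}), (∀ f ∈ G, IntoKappa κ f) →
      #G ≤ Cardinal.lift.{1} (Order.succ κ) → ¬ DominatingFam κ G) :
    (∀ A : Set (Ordinal.{0} → Bool),
      #A = Cardinal.lift.{1} (Order.succ κ) → SMZ κ A) ∧
    ∃ A : Set (Ordinal.{0} → Bool),
      #A = Cardinal.lift.{1} (Order.succ κ) ∧ SMZ κ A := by
  obtain ⟨F, hF⟩ := exists_codingOK ((Cardinal.natCast_lt_aleph0 (n := 2)).le.trans hκ.le) hpow
  subst hμ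
  have hsmz : ∀ A : Set (Ordinal.{0} → Bool),
      #A ≤ lift.{1} (Order.succ (Order.succ μ)) → SMZ (Order.succ μ) A :=
    fun A hA => smz_of_not_dominatingFam (Order.lt_succ_iff.mp hκ) hF fun c hc =>
      hd _ (forall_mem_image.mpr fun η _ => hc η) (Cardinal.mk_image_le.trans hA)
  have hsingletons : #((fun i j => decide (j = i)) '' Iio (Order.succ (Order.succ μ)).ord) =
      lift.{1} (Order.succ (Order.succ μ)) := by
    rw [Cardinal.mk_image_eq fun i i' h => by simpa using congrFun h i, Cardinal.mk_Iio_ordinal,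
      Cardinal.card_ord]
  exact ⟨fun A hA => hsmz A hA.le, _, hsingletons, hsmz _ hsingletons.le⟩

end
end

section
/- Let $\kappa = \mu^+ = \kappa^{<\kappa}$ with injections $F_i : {}^{i}2 \to \kappa$, and let $\mathcal{F} \subseteq {}^{\kappa}\kappa$ be a dominating family with respect to $<^*_{\kappa}$. If $X \subseteq \kappa$ has size $\kappa$ and contains no limit ordinals, and for each $f \in \mathcal{F}$ one chooses $\eta_f \in {}^{\kappa}2$ with $f \upharpoonright X <^*_{\kappa} (\overline{F} \circ \eta_f) \upharpoonright X$, then the set $A = \{\eta_f : f \in \mathcal{F}\}$ does not have strong measure zero. -/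
/-!
Split `X` into `κ` disjoint pieces of size `κ` and apply strong measure zero to each piece `a`,
getting a cover by cylinders `[c_a(ξ) ↾ ξ]`, `ξ ∈ X_a`. Let `h(ξ) = F_ξ(c_a(ξ))` for `ξ ∈ X_a`.
Every `ν ∈ A` lies in one cylinder from each piece, and there `F_ξ(ν) = h(ξ)`; so
`F ∘ ν ≤ h` on `κ` many points of `X`. For `f ∈ 𝓕` dominating `h`, transitivity of `<*`
turns `f <* F ∘ η_f` on `X` into `h <* F ∘ η_f` on `X`, which is impossible for `ν = η_f`.
-/

open Cardinal Set

noncomputable section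

namespace LtStarOn

variable {κ : Cardinal.{0}} {X Y : Set Ordinal.{0}} {f g k : Ordinal.{0} → Ordinal.{0}}

theorem mono (hXY : X ⊆ Y) (hfg : LtStarOn κ Y f g) : LtStarOn κ X f g :=
  (mk_le_mk_of_subset fun _ hi => And.intro (hXY hi.1) hi.2).trans_lt hfg

theorem trans (hκ : ℵ₀ ≤ κ) (hfg : LtStarOn κ X f g) (hgk : LtStarOn κ X g k) :
    LtStarOn κ X f k := by
  have hsub : {i | i ∈ X ∧ k i ≤ f i} ⊆ {i | i ∈ X ∧ g i ≤ f i} ∪ {i | i ∈ X ∧ k i ≤ g i} := by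
    rintro i ⟨hi, hki⟩
    rcases le_or_gt (g i) (f i) with hgf | hfg
    · exact Or.inl ⟨hi, hgf⟩
    · exact Or.inr ⟨hi, hki.trans hfg.le⟩
  calc #{i | i ∈ X ∧ k i ≤ f i}
      ≤ #{i | i ∈ X ∧ g i ≤ f i} + #{i | i ∈ X ∧ k i ≤ g i} :=
        (mk_le_mk_of_subset hsub).trans (mk_union_le _ _)
    _ < lift.{1} κ := add_lt_of_lt (aleph0_le_lift.mpr hκ) hfg hgk

end LtStarOn

theorem SMZ.exists_not_ltStarOn {κ : Cardinal.{0}} {A : Set (Ordinal.{0} → Bool)}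
    (hA : SMZ κ A) (hκ : ℵ₀ ≤ κ) {F : Ordinal.{0} → (Ordinal.{0} → Bool) → Ordinal.{0}}
    (hFlt : ∀ i < κ.ord, ∀ ν, F i ν < κ.ord)
    (hFres : ∀ i ν ν', (∀ j < i, ν j = ν' j) → F i ν = F i ν')
    {X : Set Ordinal.{0}} (hXsub : X ⊆ Iio κ.ord) (hXcard : #X = lift.{1} κ) :
    ∃ h, IntoKappa κ h ∧ ∀ ν ∈ A, ¬ LtStarOn κ X h (fun i => F i ν) := by
  classical
  obtain ⟨e⟩ : Nonempty (X × X ≃ X) := Cardinal.eq.mp <| by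
    rw [mk_prod, lift_id, mul_eq_self (hXcard ▸ aleph0_le_lift.mpr hκ)]
  have hpiece : ∀ a : X, ∃ c : Ordinal.{0} → Ordinal.{0} → Bool,
      A ⊆ ⋃ b : X, cyl (e (a, b)) (c (e (a, b))) := by
    intro a
    have hinj : Function.Injective fun b => (e (a, b) : Ordinal.{0}) :=
      fun b b' hbb => (Prod.ext_iff.mp (e.injective (Subtype.ext hbb))).2
    obtain ⟨c, hc⟩ := hA (range fun b => (e (a, b) : Ordinal.{0}))
      (range_subset_iff.mpr fun b => hXsub (e (a, b)).2) (by rw [mk_range_eq _ hinj, hXcard])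
    exact ⟨c, by simpa only [biUnion_range] using hc⟩
  choose c hc using hpiece
  let w : Ordinal.{0} → Ordinal.{0} → Bool := fun i =>
    if hi : i ∈ X then c (e.symm ⟨i, hi⟩).1 i else fun _ => false
  refine ⟨fun i => F i (w i), fun i hi => hFlt i hi _, fun ν hν hlt => ?_⟩
  choose b hb using fun a => mem_iUnion.mp (hc a hν)
  have hinj : Function.Injective fun a => (e (a, b a) : Ordinal.{0}) :=
    fun a a' haa => (Prod.ext_iff.mp (e.injective (Subtype.ext haa))).1
  have hrange : range (fun a => (e (a, b a) : Ordinal.{0})) ⊆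
      {i | i ∈ X ∧ F i ν ≤ F i (w i)} := by
    rintro _ ⟨a, rfl⟩
    refine ⟨(e (a, b a)).2, le_of_eq ?_⟩
    simp only [w, Subtype.coe_prop, dif_pos, Subtype.coe_eta, Equiv.symm_apply_apply]
    exact hFres _ _ _ (hb a)
  refine hlt.not_ge ?_
  calc lift.{1} κ = #(range fun a => (e (a, b a) : Ordinal.{0})) := by
        rw [mk_range_eq _ hinj, hXcard]
    _ ≤ _ := mk_le_mk_of_subset hrange

theorem dominating_family_not_smz_general (κ : Cardinal.{0})
    (hκ : ℵ₀ < κ)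
    (F : Ordinal.{0} → (Ordinal.{0} → Bool) → Ordinal.{0}) (hF : CodingOK κ F)
    (G : Set (Ordinal.{0} → Ordinal.{0}))
    (hGdom : DominatingFam κ G)
    (X : Set Ordinal.{0}) (hXsub : X ⊆ Set.Iio κ.ord)
    (hXcard : #X = Cardinal.lift.{1} κ)
    (η : (Ordinal.{0} → Ordinal.{0}) → (Ordinal.{0} → Bool))
    (hη : ∀ f ∈ G, LtStarOn κ X f (fun i => F i (η f))) :
    ¬ SMZ κ (η '' G) := by
  intro hsmz
  obtain ⟨h, hh, hA⟩ := hsmz.exists_not_ltStarOn hκ.le hF.1 hF.2.1 hXsub hXcard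
  obtain ⟨f, hfG, hhf⟩ := hGdom h hh
  exact hA (η f) ⟨f, hfG, rfl⟩ ((hhf.mono hXsub).trans hκ.le (hη f hfG))

/-- if `G` is a dominating family, `X ⊆ κ` has size `κ` and
contains no limit ordinals, and for each `f ∈ G` one picks `η_f ∈ ^κ2` with
`f ↾ X <*_κ (F ∘ η_f) ↾ X`, then `A = {η_f : f ∈ G}` is not strong measure zero. -/
theorem dominating_family_not_smz (κ μ : Cardinal.{0}) (hμ : κ = Order.succ μ)
    (hκ : ℵ₀ < κ) (hpow : κ ^< κ = κ)
    (F : Ordinal.{0} → (Ordinal.{0} → Bool) → Ordinal.{0}) (hF : CodingOK κ F)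
    (G : Set (Ordinal.{0} → Ordinal.{0})) (hGin : ∀ f ∈ G, IntoKappa κ f)
    (hGdom : DominatingFam κ G)
    (X : Set Ordinal.{0}) (hXsub : X ⊆ Set.Iio κ.ord)
    (hXcard : #X = Cardinal.lift.{1} κ) (hXnolim : ∀ i ∈ X, ¬ Order.IsSuccLimit i)
    (η : (Ordinal.{0} → Ordinal.{0}) → (Ordinal.{0} → Bool))
    (hη : ∀ f ∈ G, LtStarOn κ X f (fun i => F i (η f))) :
    ¬ SMZ κ (η '' G) :=
  dominating_family_not_smz_general κ hκ F hF G hGdom X hXsub hXcard η hη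

end
end
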